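/- arXiv:2407.15166 — 4 statements merged into one kernel-verified Lean document; each statement's English description precedes it below -/
import Mathlib

section
/- Let X₁, …, Xₙ be i.i.d. real-valued random variables with common distribution X, let 0 < p < 1, and let ε > 0 with p + ε < 1. Let x_p = inf{x ∈ ℝ : P(X ≤ x) ≥ p} be the p-th quantile of X, and assume P(X < x_p) = p. Let x̂_p denote the ⌈(p + ε)·n⌉-th order statistic of the sample (the ⌈(p + ε)·n⌉-th smallest value among X₁, …, Xₙ). Then P(x̂_p ≥ x_p) = F_Binom(⌈(p + ε)·n⌉ − 1; n, p), where F_Binom(k; n, p) = Σ_{j=0}^{k} C(n, j) p^j (1−p)^{n−j} is the cumulative distribution function of the binomial distribution with parameters n and p. -/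
open MeasureTheory ProbabilityTheory


lemma sorted_le_getElem_iff {l : List ℝ} (hl : l.Pairwise (· ≤ ·)) {j : ℕ} (hj : j < l.length)
    (x : ℝ) : x ≤ l[j] ↔ l.countP (fun y => decide (y < x)) ≤ j := by
  constructor
  · intro hx
    have h0 : (l.drop j).countP (fun y => decide (y < x)) = 0 := by
      rw [List.countP_eq_zero]
      intro y hy
      simp only [decide_eq_true_eq, not_lt]
      refine le_trans hx ?_
      obtain ⟨i, hi, rfl⟩ := List.getElem_of_mem hy
      rw [List.getElem_drop]
      exact hl.rel_get_of_le (a := ⟨j, hj⟩) (b := ⟨j + i, by simp at hi; omega⟩) (by simp)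
    have := List.countP_append (p := fun y => decide (y < x)) (l₁ := l.take j) (l₂ := l.drop j)
    rw [List.take_append_drop] at this
    rw [this, h0, add_zero]
    exact (List.countP_le_length (p := _)).trans (by simp)
  · intro hc
    by_contra hx
    push_neg at hx
    have h1 : (l.take (j+1)).countP (fun y => decide (y < x)) = j + 1 := by
      have hlen : (l.take (j+1)).length = j + 1 := by simp; omega
      have : (l.take (j+1)).countP (fun y => decide (y < x)) = (l.take (j+1)).length := by
        rw [List.countP_eq_length]
        intro y hy
        simp only [decide_eq_true_eq]
        obtain ⟨i, hi, rfl⟩ := List.getElem_of_mem hy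
        rw [List.getElem_take]
        have hij : i ≤ j := by rw [hlen] at hi; omega
        calc l[i] ≤ l[j] := hl.rel_get_of_le (a := ⟨i, by omega⟩) (b := ⟨j, hj⟩) (by simpa)
          _ < x := hx
      omega
    have := List.countP_append (p := fun y => decide (y < x)) (l₁ := l.take (j+1)) (l₂ := l.drop (j+1))
    rw [List.take_append_drop] at this
    omega

/-- The `k`-th order statistic (1-indexed): the `k`-th smallest value of the sample `v`. -/
noncomputable def orderStat {n : ℕ} (v : Fin n → ℝ) (k : ℕ) : ℝ :=
  (Multiset.sort (Multiset.map v Finset.univ.val) (· ≤ ·)).getD (k - 1) 0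

lemma orderStat_ge_iff {n : ℕ} (v : Fin n → ℝ) {k : ℕ} (hk1 : 1 ≤ k) (hkn : k ≤ n) (x : ℝ) :
    x ≤ orderStat v k ↔ (Finset.univ.filter (fun i => v i < x)).card ≤ k - 1 := by
  set l := Multiset.sort (Multiset.map v Finset.univ.val) (· ≤ ·) with hldef
  have hlen : l.length = n := by
    rw [hldef]
    rw [Multiset.length_sort]
    simp
  have hj : k - 1 < l.length := by omega
  have key : l.countP (fun y => decide (y < x)) = (Finset.univ.filter (fun i => v i < x)).card := by
    have h1 : Multiset.countP (fun y => y < x) (↑l : Multiset ℝ)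
        = Multiset.countP (fun y => y < x) (Multiset.map v Finset.univ.val) := by
      rw [hldef, Multiset.sort_eq]
    rw [Multiset.coe_countP, Multiset.countP_map] at h1
    rw [h1, Finset.card_filter]
    simp [Multiset.countP_eq_card_filter]
    rfl
  rw [orderStat]
  rw [show Multiset.sort (Multiset.map v Finset.univ.val) (· ≤ ·) = l from rfl]
  rw [List.getD_eq_getElem l 0 hj,
    sorted_le_getElem_iff (Multiset.pairwise_sort _ _) hj, key]

/-- Binomial CDF: `F_Binom(k; n, p) = ∑_{j=0}^k C(n,j) p^j (1-p)^{n-j}`. -/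
noncomputable def binomCDF (n : ℕ) (p : ℝ) (k : ℕ) : ℝ :=
  ∑ j ∈ Finset.range (k + 1), (n.choose j : ℝ) * p ^ j * (1 - p) ^ (n - j)

/-- For i.i.d. real random variables `X₁, …, Xₙ` with common law `ν`, `0 < p < 1`,
`ε > 0` with `p + ε < 1`, if `x_p` is the `p`-th quantile and `P(X < x_p) = p`, then the
probability that the `⌈(p+ε)n⌉`-th order statistic is at least `x_p` equals
`F_Binom(⌈(p+ε)n⌉ - 1; n, p)`. -/
theorem percentile_bound_as_binomial
    {Ω : Type*} [MeasurableSpace Ω] (μ : Measure Ω) [IsProbabilityMeasure μ]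
    (n : ℕ) (hn : 0 < n) (X : Fin n → Ω → ℝ)
    (hmeas : ∀ i, Measurable (X i))
    (hindep : iIndepFun X μ)
    (ν : Measure ℝ) [IsProbabilityMeasure ν]
    (hid : ∀ i, μ.map (X i) = ν)
    (p ε : ℝ) (hp0 : 0 < p) (hp1 : p < 1) (hε : 0 < ε) (hpε : p + ε < 1)
    (xp : ℝ) (hxp : xp = sInf {x : ℝ | p ≤ (ν (Set.Iic x)).toReal})
    (hcont : (ν (Set.Iio xp)).toReal = p) :
    (μ {ω | xp ≤ orderStat (fun i => X i ω) ⌈(p + ε) * n⌉₊}).toReal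
      = binomCDF n p (⌈(p + ε) * n⌉₊ - 1) := by
  classical
  set k := ⌈(p + ε) * n⌉₊ with hkdef
  have hn' : (0:ℝ) < n := Nat.cast_pos.mpr hn
  have hk1 : 1 ≤ k := Nat.one_le_iff_ne_zero.mpr (by
    have : 0 < k := Nat.ceil_pos.mpr (by positivity)
    omega)
  have hkn : k ≤ n := Nat.ceil_le.mpr (by nlinarith)
  -- rewrite the event via counting
  have hset : {ω | xp ≤ orderStat (fun i => X i ω) k}
      = {ω | (Finset.univ.filter (fun i => X i ω < xp)).card ≤ k - 1} := by
    ext ω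
    exact orderStat_ge_iff _ hk1 hkn xp
  set q := ν (Set.Iio xp) with hqdef
  have hq1 : q ≤ 1 := prob_le_one
  have hqt : q ≠ ⊤ := (hq1.trans_lt ENNReal.one_lt_top).ne
  set A : Fin n → Set Ω := fun i => X i ⁻¹' Set.Iio xp with hAdef
  have hAmeas : ∀ i, MeasurableSet (A i) := fun i => (hmeas i) measurableSet_Iio
  have hAq : ∀ i, μ (A i) = q := by
    intro i
    rw [hAdef]
    rw [← Measure.map_apply (hmeas i) measurableSet_Iio, hid i]
  have hAcq : ∀ i, μ ((A i)ᶜ) = 1 - q := by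
    intro i
    rw [prob_compl_eq_one_sub (hAmeas i), hAq i]
  set B : Finset (Fin n) → Fin n → Set Ω := fun S i => if i ∈ S then A i else (A i)ᶜ with hBdef
  have hE : ∀ S : Finset (Fin n),
      {ω | Finset.univ.filter (fun i => X i ω < xp) = S} = ⋂ i, B S i := by
    intro S
    ext ω
    simp only [Set.mem_setOf_eq, Finset.ext_iff, Finset.mem_filter, Finset.mem_univ, true_and,
      Set.mem_iInter, hBdef]
    refine forall_congr' fun i => ?_
    by_cases h : i ∈ S <;> simp [h, hAdef]
  have hprod : ∀ S : Finset (Fin n),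
      μ (⋂ i, B S i) = q ^ S.card * (1 - q) ^ (n - S.card) := by
    intro S
    rw [hindep.meas_iInter (fun i => ?_)]
    · calc ∏ i, μ (B S i) = (∏ i ∈ S, μ (B S i)) * ∏ i ∈ Sᶜ, μ (B S i) :=
          (Finset.prod_mul_prod_compl S _).symm
        _ = q ^ S.card * (1 - q) ^ (n - S.card) := by
          have h1 : ∀ i ∈ S, μ (B S i) = q := fun i hi => by
            simp only [hBdef, hi, if_true]; exact hAq i
          have h2 : ∀ i ∈ Sᶜ, μ (B S i) = 1 - q := fun i hi => by
            simp only [hBdef, Finset.mem_compl.mp hi, if_false]; exact hAcq i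
          rw [Finset.prod_congr rfl h1, Finset.prod_congr rfl h2, Finset.prod_const,
            Finset.prod_const, Finset.card_compl]
          simp
    · by_cases h : i ∈ S
      · exact ⟨Set.Iio xp, measurableSet_Iio, by simp [hBdef, h, hAdef]⟩
      · exact ⟨Set.Ici xp, measurableSet_Ici, by
          simp only [hBdef, h, if_false, hAdef, ← Set.preimage_compl, Set.compl_Iio]⟩
  set 𝒮 := Finset.univ.powerset.filter (fun S : Finset (Fin n) => S.card ≤ k - 1) with hSdef
  have hunion : {ω | (Finset.univ.filter (fun i => X i ω < xp)).card ≤ k - 1}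
      = ⋃ S ∈ 𝒮, {ω | Finset.univ.filter (fun i => X i ω < xp) = S} := by
    ext ω
    simp only [Set.mem_setOf_eq, Set.mem_iUnion, hSdef, Finset.mem_filter, Finset.mem_powerset,
      exists_prop]
    constructor
    · intro h
      exact ⟨_, ⟨Finset.subset_univ _, h⟩, rfl⟩
    · rintro ⟨S, ⟨-, hcard⟩, hfS⟩
      rw [hfS]
      exact hcard
  have hdisj : (↑𝒮 : Set (Finset (Fin n))).PairwiseDisjoint
      (fun S => {ω | Finset.univ.filter (fun i => X i ω < xp) = S}) := by
    intro S _ T _ hST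
    refine Set.disjoint_left.mpr fun ω hS hT => hST ?_
    rw [← hS, ← hT]
  have hEmeas : ∀ S : Finset (Fin n),
      MeasurableSet {ω | Finset.univ.filter (fun i => X i ω < xp) = S} := by
    intro S
    rw [hE S]
    refine MeasurableSet.iInter fun i => ?_
    by_cases h : i ∈ S <;> simp only [hBdef, h, if_true, if_false]
    exacts [hAmeas i, (hAmeas i).compl]
  have hmain : μ {ω | xp ≤ orderStat (fun i => X i ω) k}
      = ∑ S ∈ 𝒮, q ^ S.card * (1 - q) ^ (n - S.card) := by
    rw [hset, hunion, measure_biUnion_finset hdisj (fun S _ => hEmeas S)]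
    exact Finset.sum_congr rfl fun S _ => by rw [hE S, hprod S]
  -- regroup by cardinality
  have hSplit : 𝒮 = (Finset.range k).biUnion (fun j => Finset.powersetCard j Finset.univ) := by
    ext S
    simp only [hSdef, Finset.mem_filter, Finset.mem_powerset, Finset.mem_biUnion,
      Finset.mem_range, Finset.mem_powersetCard]
    constructor
    · rintro ⟨hsub, hcard⟩
      exact ⟨S.card, by omega, hsub, rfl⟩
    · rintro ⟨j, hj, hsub, rfl⟩
      exact ⟨hsub, by omega⟩
  have hsum : ∑ S ∈ 𝒮, q ^ S.card * (1 - q) ^ (n - S.card)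
      = ∑ j ∈ Finset.range k, (n.choose j) • (q ^ j * (1 - q) ^ (n - j)) := by
    rw [hSplit, Finset.sum_biUnion (fun a _ b _ hab => Finset.disjoint_left.mpr
      (fun S hSa hSb => hab (by
        rw [← (Finset.mem_powersetCard.mp hSa).2, ← (Finset.mem_powersetCard.mp hSb).2])))]
    refine Finset.sum_congr rfl fun j _ => ?_
    rw [Finset.sum_congr rfl (fun S hS => by
      rw [(Finset.mem_powersetCard.mp hS).2]), Finset.sum_const, Finset.card_powersetCard]
    simp
  rw [hmain, hsum]
  -- pass to toReal
  have hterm : ∀ j, ((n.choose j) • (q ^ j * (1 - q) ^ (n - j))).toReal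
      = (n.choose j : ℝ) * p ^ j * (1 - p) ^ (n - j) := by
    intro j
    rw [nsmul_eq_mul, ENNReal.toReal_mul, ENNReal.toReal_mul, ENNReal.toReal_pow,
      ENNReal.toReal_pow, ENNReal.toReal_sub_of_le hq1 ENNReal.one_ne_top,
      ENNReal.toReal_one, hcont]
    simp [mul_assoc]
  rw [ENNReal.toReal_sum (fun j _ => by
    rw [nsmul_eq_mul]
    exact ENNReal.mul_ne_top (ENNReal.natCast_ne_top _)
      (ENNReal.mul_ne_top (ENNReal.pow_ne_top hqt)
        (ENNReal.pow_ne_top (ENNReal.sub_ne_top ENNReal.one_ne_top))))]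
  rw [binomCDF, show k - 1 + 1 = k by omega]
  exact Finset.sum_congr rfl fun j _ => hterm j
end

section
/- Let X₁, …, Xₙ be i.i.d. real-valued random variables with common distribution X, let 0 < p < 1, and let ε > 0 with p + ε < 1. Let x_p = inf{x ∈ ℝ : P(X ≤ x) ≥ p} be the p-th quantile of X, and assume P(X < x_p) = p. Let x̂_p denote the ⌈(p + ε)·n⌉-th order statistic of the sample. Then P(x̂_p ≥ x_p) ≥ 1 − exp(−n · D_KL(Bernoulli(p + ε) ‖ Bernoulli(p))), where D_KL(Bernoulli(a) ‖ Bernoulli(b)) = a·ln(a/b) + (1−a)·ln((1−a)/(1−b)). -/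
open MeasureTheory ProbabilityTheory

lemma sorted_getD_lt_iff (l : List ℝ) (hl : l.Pairwise (· ≤ ·)) (c : ℝ) (k : ℕ)
    (hk1 : 1 ≤ k) (hkn : k ≤ l.length) :
    l.getD (k-1) 0 < c ↔ k ≤ l.countP (fun x => decide (x < c)) := by
  have hkl : k - 1 < l.length := by omega
  rw [List.getD_eq_getElem l 0 hkl]
  constructor
  · intro h
    calc k = (l.take k).countP (fun x => decide (x < c)) := by
            rw [List.countP_eq_length.mpr, List.length_take]
            · omega
            · intro x hx
              rw [List.mem_take_iff_getElem] at hx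
              obtain ⟨i, hi, rfl⟩ := hx
              simp only [decide_eq_true_eq]
              exact lt_of_le_of_lt (List.Pairwise.rel_get_of_le hl
                (by rw [Fin.mk_le_mk]; omega : (⟨i, by omega⟩ : Fin l.length) ≤ ⟨k-1, hkl⟩)) h
      _ ≤ l.countP _ := (List.take_sublist k l).countP_le
  · intro h
    by_contra hc
    push_neg at hc
    have hdrop : (l.drop (k-1)).countP (fun x => decide (c ≤ x)) = l.length - (k-1) := by
      rw [List.countP_eq_length.mpr, List.length_drop]
      intro x hx
      rw [List.mem_drop_iff_getElem] at hx
      obtain ⟨i, hi, rfl⟩ := hx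
      simp only [decide_eq_true_eq]
      exact le_trans hc (List.Pairwise.rel_get_of_le hl
        (by rw [Fin.mk_le_mk]; omega : (⟨k-1, hkl⟩ : Fin l.length) ≤ ⟨k-1+i, by omega⟩))
    have hsplit : l.countP (fun x => decide (x < c)) + l.countP (fun x => decide (c ≤ x)) = l.length := by
      have := List.length_eq_countP_add_countP (fun x => decide (x < c)) (l := l)
      rw [this]
      congr 1
      apply List.countP_congr
      intro x _
      simp [not_lt]
    have hle : l.length - (k-1) ≤ l.countP (fun x => decide (c ≤ x)) := by
      rw [← hdrop]
      exact (List.drop_sublist _ l).countP_le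
    omega

lemma orderStat_lt_iff {n : ℕ} (v : Fin n → ℝ) (c : ℝ) (k : ℕ)
    (hk1 : 1 ≤ k) (hkn : k ≤ n) :
    orderStat v k < c ↔ k ≤ (Finset.univ.filter fun i => v i < c).card := by
  classical
  set l := Multiset.sort (Multiset.map v Finset.univ.val) (· ≤ ·) with hl
  have hlen : l.length = n := by
    rw [hl, Multiset.length_sort, Multiset.card_map]
    simp
  have hcoe : (↑l : Multiset ℝ) = Multiset.map v Finset.univ.val := Multiset.sort_eq _ _
  have hcnt : l.countP (fun x => decide (x < c)) = (Finset.univ.filter fun i => v i < c).card := by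
    have h1 : (↑l : Multiset ℝ).countP (fun x => x < c) = l.countP (fun x => decide (x < c)) :=
      Multiset.coe_countP _ _
    rw [← h1, hcoe, Multiset.countP_map]
    rfl
  rw [orderStat, ← hl, ← hcnt]
  exact sorted_getD_lt_iff l (Multiset.pairwise_sort _ _) c k hk1 (by omega)

/-- KL divergence between Bernoulli distributions:
`D_KL(Bernoulli(a) ‖ Bernoulli(b)) = a·ln(a/b) + (1-a)·ln((1-a)/(1-b))`. -/
noncomputable def bernoulliKL (a b : ℝ) : ℝ :=
  a * Real.log (a / b) + (1 - a) * Real.log ((1 - a) / (1 - b))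

/-- For i.i.d. real random variables `X₁, …, Xₙ` with common law `ν`, `0 < p < 1`,
`ε > 0` with `p + ε < 1`, if `x_p` is the `p`-th quantile and `P(X < x_p) = p`, then the
probability that the `⌈(p+ε)n⌉`-th order statistic is at least `x_p` is at least
`1 - exp(-n · D_KL(Bernoulli(p+ε) ‖ Bernoulli(p)))`. -/
theorem percentile_bound_chernoff
    {Ω : Type*} [MeasurableSpace Ω] (μ : Measure Ω) [IsProbabilityMeasure μ]
    (n : ℕ) (hn : 0 < n) (X : Fin n → Ω → ℝ)
    (hmeas : ∀ i, Measurable (X i))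
    (hindep : iIndepFun X μ)
    (ν : Measure ℝ) [IsProbabilityMeasure ν]
    (hid : ∀ i, μ.map (X i) = ν)
    (p ε : ℝ) (hp0 : 0 < p) (hp1 : p < 1) (hε : 0 < ε) (hpε : p + ε < 1)
    (xp : ℝ) (hxp : xp = sInf {x : ℝ | p ≤ (ν (Set.Iic x)).toReal})
    (hcont : (ν (Set.Iio xp)).toReal = p) :
    1 - Real.exp (-(n : ℝ) * bernoulliKL (p + ε) p)
      ≤ (μ {ω | xp ≤ orderStat (fun i => X i ω) ⌈(p + ε) * n⌉₊}).toReal := by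
  classical
  set q : ℝ := p + ε with hq
  have hq0 : 0 < q := by positivity
  have hpq : p < q := by simp [hq]; linarith
  have hq1 : q < 1 := hpε
  set t : ℝ := Real.log (q * (1 - p) / ((1 - q) * p)) with htdef
  have hfrac : 1 < q * (1 - p) / ((1 - q) * p) := by
    rw [lt_div_iff₀ (by nlinarith)]
    nlinarith
  have ht : 0 < t := Real.log_pos hfrac
  -- the Bernoulli indicators
  set g : ℝ → ℝ := fun x => if x < xp then 1 else 0 with hg
  have hgmeas : Measurable g := Measurable.ite measurableSet_Iio measurable_const measurable_const
  set Y : Fin n → Ω → ℝ := fun i => g ∘ X i with hY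
  have hYmeas : ∀ i, Measurable (Y i) := fun i => hgmeas.comp (hmeas i)
  have hYindep : iIndepFun Y μ := hindep.comp (fun _ => g) (fun _ => hgmeas)
  have hAi : ∀ i, (μ (X i ⁻¹' Set.Iio xp)).toReal = p := by
    intro i
    rw [← Measure.map_apply (hmeas i) measurableSet_Iio, hid i, hcont]
  -- pointwise decomposition of exp (t * Y i ω)
  have hpt : ∀ (i : Fin n) (ω : Ω), Real.exp (t * Y i ω)
      = (X i ⁻¹' Set.Iio xp).indicator (fun _ => Real.exp t - 1) ω + 1 := by
    intro i ω
    by_cases h : X i ω < xp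
    · simp [hY, hg, Function.comp, h, Set.indicator_of_mem (show ω ∈ X i ⁻¹' Set.Iio xp from h)]
    · simp [hY, hg, Function.comp, h, Set.indicator_of_notMem (show ω ∉ X i ⁻¹' Set.Iio xp from h)]
  have hint : ∀ i, Integrable (fun ω => Real.exp (t * Y i ω)) μ := by
    intro i
    have h1 : Integrable ((X i ⁻¹' Set.Iio xp).indicator (fun _ => Real.exp t - 1)) μ :=
      (integrable_const _).indicator ((hmeas i) measurableSet_Iio)
    have := h1.add (integrable_const (1 : ℝ))
    exact this.congr (Filter.Eventually.of_forall fun ω => (hpt i ω).symm)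
  have hmgf : ∀ i, mgf (Y i) μ t = 1 - p + p * Real.exp t := by
    intro i
    rw [mgf]
    calc ∫ ω, Real.exp (t * Y i ω) ∂μ
        = ∫ ω, ((X i ⁻¹' Set.Iio xp).indicator (fun _ => Real.exp t - 1) ω + 1) ∂μ :=
          integral_congr_ae (Filter.Eventually.of_forall (hpt i))
      _ = (∫ ω, (X i ⁻¹' Set.Iio xp).indicator (fun _ => Real.exp t - 1) ω ∂μ) + ∫ _, (1:ℝ) ∂μ :=
          integral_add ((integrable_const _).indicator ((hmeas i) measurableSet_Iio)) (integrable_const _)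
      _ = (Real.exp t - 1) * p + 1 := by
          rw [integral_indicator_const _ ((hmeas i) measurableSet_Iio), integral_const]
          simp [measureReal_def, hAi i, mul_comm]
      _ = 1 - p + p * Real.exp t := by ring
  set S : Ω → ℝ := ∑ i, Y i with hS
  have hSfun : S = fun ω => ∑ i, Y i ω := funext fun ω => Finset.sum_apply _ _ _
  have hSapp : ∀ ω, S ω = ((Finset.univ.filter fun i => X i ω < xp).card : ℝ) := by
    intro ω
    rw [hSfun]
    simp only [hY, hg, Function.comp_apply]
    rw [← Finset.sum_filter]
    simp
  have hSmeas : Measurable S := by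
    rw [hSfun]
    exact Finset.measurable_sum _ fun i _ => hYmeas i
  -- Chernoff bound
  have hintS : Integrable (fun ω => Real.exp (t * S ω)) μ := by
    refine Integrable.mono' (integrable_const (Real.exp (t * n)))
      ((Real.measurable_exp.comp (measurable_const.mul hSmeas)).aestronglyMeasurable)
      (Filter.Eventually.of_forall fun ω => ?_)
    rw [Real.norm_eq_abs, abs_of_pos (Real.exp_pos _), Real.exp_le_exp]
    have hSle : S ω ≤ n := by
      rw [hSapp ω]
      have hcard : (Finset.univ.filter fun i => X i ω < xp).card ≤ n := by
        simpa using Finset.card_filter_le Finset.univ (fun i => X i ω < xp)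
      exact_mod_cast hcard
    nlinarith
  have hcher := measure_ge_le_exp_mul_mgf (X := S) (μ := μ) (t := t) (q * n) ht.le hintS
  have hmgfS : mgf S μ t = (1 - p + p * Real.exp t) ^ n := by
    rw [hS, hYindep.mgf_sum hYmeas]
    simp [hmgf]
  -- value computations
  have h1p : (0:ℝ) < 1 - p := by linarith
  have h1q : (0:ℝ) < 1 - q := by linarith
  have hexpt : Real.exp t = q * (1 - p) / ((1 - q) * p) := Real.exp_log (by positivity)
  have hval : 1 - p + p * Real.exp t = (1 - p) / (1 - q) := by
    rw [hexpt]; field_simp; ring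
  have htlog : t = Real.log q + Real.log (1 - p) - (Real.log (1 - q) + Real.log p) := by
    rw [htdef, Real.log_div (by positivity) (by positivity),
      Real.log_mul hq0.ne' h1p.ne', Real.log_mul h1q.ne' hp0.ne']
  have hbound : Real.exp (-t * (q * n)) * mgf S μ t = Real.exp (-(n:ℝ) * bernoulliKL q p) := by
    rw [hmgfS, hval, ← Real.exp_log (show (0:ℝ) < (1-p)/(1-q) by positivity), ← Real.exp_nat_mul,
      ← Real.exp_add]
    congr 1
    rw [Real.log_div h1p.ne' h1q.ne', bernoulliKL, Real.log_div hq0.ne' hp0.ne',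
      Real.log_div h1q.ne' h1p.ne', htlog]
    ring
  -- event identification
  set k : ℕ := ⌈q * (n:ℝ)⌉₊ with hk
  have hqn0 : (0:ℝ) < q * n := by
    have : (0:ℝ) < (n:ℝ) := by exact_mod_cast hn
    positivity
  have hk1 : 1 ≤ k := Nat.one_le_iff_ne_zero.mpr (Nat.ceil_pos.mpr hqn0).ne'
  have hkn : k ≤ n := by
    rw [hk]
    refine Nat.ceil_le.mpr ?_
    have hn0 : (0:ℝ) ≤ (n:ℝ) := Nat.cast_nonneg n
    nlinarith
  set B : Set Ω := {ω | q * n ≤ S ω} with hB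
  have hBmeas : MeasurableSet B := hSmeas measurableSet_Ici
  have hEeq : {ω | xp ≤ orderStat (fun i => X i ω) k} = Bᶜ := by
    ext ω
    simp only [Set.mem_setOf_eq, Set.mem_compl_iff, hB]
    rw [← not_lt]
    apply not_congr
    rw [orderStat_lt_iff _ _ _ hk1 hkn, hSapp ω, hk]
    exact Nat.ceil_le
  rw [hEeq, prob_compl_eq_one_sub hBmeas,
    ENNReal.toReal_sub_of_le prob_le_one ENNReal.one_ne_top, ENNReal.toReal_one]
  have : (μ B).toReal ≤ Real.exp (-(n:ℝ) * bernoulliKL q p) := by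
    rw [← hbound]
    exact hcher
  linarith
end

section
/- Let X₁, …, Xₙ be i.i.d. real-valued random variables with common distribution X, let 0 < p < 1, and let ε > 0 with p + ε < 1. Let x_p = inf{x ∈ ℝ : P(X ≤ x) ≥ p} be the p-th quantile of X, and assume P(X < x_p) = p. Let x̂_p denote the ⌈(p + ε)·n⌉-th order statistic of the sample. Then P(x̂_p ≥ x_p) ≥ 1 − exp(−2·n·ε²). -/
open MeasureTheory ProbabilityTheory

lemma bernoulli_mgf_bound (p : ℝ) (hp0 : 0 ≤ p) (hp1 : p ≤ 1) (t : ℝ) (ht : 0 ≤ t) :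
    1 - p + p * Real.exp t ≤ Real.exp (p * t + t ^ 2 / 8) := by
  set g : ℝ → ℝ := fun s => 1 - p + p * Real.exp s with hgdef
  have hg1 : ∀ s, 0 ≤ s → (1 : ℝ) ≤ g s := by
    intro s hs
    have h1 : (1 : ℝ) ≤ Real.exp s := Real.one_le_exp hs
    simp only [hgdef]
    nlinarith
  have hgpos : ∀ s, 0 ≤ s → (0 : ℝ) < g s := fun s hs => lt_of_lt_of_le one_pos (hg1 s hs)
  have hgd : ∀ s : ℝ, HasDerivAt g (p * Real.exp s) s := by
    intro s
    exact ((Real.hasDerivAt_exp s).const_mul p).const_add (1 - p)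
  set φ : ℝ → ℝ := fun s => p * Real.exp s / g s - p - s / 4 with hφdef
  have hφd : ∀ s, 0 ≤ s → HasDerivAt φ
      ((p * Real.exp s * g s - p * Real.exp s * (p * Real.exp s)) / (g s) ^ 2 - 1 / 4) s := by
    intro s hs
    have h1 : HasDerivAt (fun y => p * Real.exp y / g y)
        ((p * Real.exp s * g s - p * Real.exp s * (p * Real.exp s)) / (g s) ^ 2) s :=
      ((Real.hasDerivAt_exp s).const_mul p).div (hgd s) (hgpos s hs).ne'
    have h2 : HasDerivAt (fun y : ℝ => y / 4) (1 / 4 : ℝ) s := by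
      simpa using (hasDerivAt_id s).div_const 4
    exact (h1.sub_const p).sub h2
  have hψ : ∀ s, 0 ≤ s →
      (p * Real.exp s * g s - p * Real.exp s * (p * Real.exp s)) / (g s) ^ 2 - 1 / 4 ≤ 0 := by
    intro s hs
    have hG := hgpos s hs
    have he0 : 0 ≤ p * Real.exp s := mul_nonneg hp0 (Real.exp_pos s).le
    have heG : p * Real.exp s ≤ g s := by simp only [hgdef]; nlinarith
    rw [sub_nonpos, div_le_iff₀ (by positivity)]
    set G := g s
    set e := p * Real.exp s
    clear_value G e
    nlinarith [sq_nonneg (G - 2 * e)]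
  have hφanti : AntitoneOn φ (Set.Ici 0) := by
    apply antitoneOn_of_deriv_nonpos (convex_Ici 0)
    · intro s hs
      exact (hφd s hs).continuousAt.continuousWithinAt
    · intro s hs
      rw [interior_Ici] at hs
      exact (hφd s (le_of_lt hs)).differentiableAt.differentiableWithinAt
    · intro s hs
      rw [interior_Ici] at hs
      rw [(hφd s hs.le).deriv]
      exact hψ s hs.le
  have hφ0 : φ 0 = 0 := by simp [hφdef, hgdef]
  have hφle : ∀ s, 0 ≤ s → φ s ≤ 0 := by
    intro s hs
    calc φ s ≤ φ 0 := hφanti (Set.mem_Ici.2 le_rfl) (Set.mem_Ici.2 hs) hs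
    _ = 0 := hφ0
  set L : ℝ → ℝ := fun s => Real.log (g s) - p * s - s ^ 2 / 8 with hLdef
  have hLd : ∀ s, 0 ≤ s → HasDerivAt L (φ s) s := by
    intro s hs
    have h1 : HasDerivAt (fun y => Real.log (g y)) (p * Real.exp s / g s) s :=
      (hgd s).log (hgpos s hs).ne'
    have h2 : HasDerivAt (fun y : ℝ => p * y) p s := by
      simpa using (hasDerivAt_id s).const_mul p
    have h3 : HasDerivAt (fun y : ℝ => y ^ 2 / 8) (s / 4) s := by
      have := (hasDerivAt_pow 2 s).div_const 8
      simpa using this.congr_deriv (by ring)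
    exact (h1.sub h2).sub h3
  have hLanti : AntitoneOn L (Set.Ici 0) := by
    apply antitoneOn_of_deriv_nonpos (convex_Ici 0)
    · intro s hs
      exact (hLd s hs).continuousAt.continuousWithinAt
    · intro s hs
      rw [interior_Ici] at hs
      exact (hLd s hs.le).differentiableAt.differentiableWithinAt
    · intro s hs
      rw [interior_Ici] at hs
      rw [(hLd s hs.le).deriv]
      exact hφle s hs.le
  have hL0 : L 0 = 0 := by simp [hLdef, hgdef]
  have hLt : L t ≤ 0 := le_of_le_of_eq (hLanti (Set.mem_Ici.2 le_rfl) (Set.mem_Ici.2 ht) ht) hL0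
  have hkey : Real.log (g t) ≤ p * t + t ^ 2 / 8 := by
    simp only [hLdef] at hLt; linarith
  have := (Real.log_le_iff_le_exp (hgpos t ht)).mp hkey
  simpa [hgdef] using this

lemma orderStat_lt_count {n : ℕ} (v : Fin n → ℝ) (x : ℝ) (k : ℕ)
    (hk1 : 1 ≤ k) (hkn : k ≤ n) (h : orderStat v k < x) :
    k ≤ (Finset.univ.filter (fun i => v i < x)).card := by
  classical
  set l := Multiset.sort (Multiset.map v Finset.univ.val) (· ≤ ·) with hl
  have hlen : l.length = n := by
    simp [hl, Multiset.length_sort]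
  have hsort : l.Pairwise (· ≤ ·) := Multiset.pairwise_sort _ _
  have hklen : k - 1 < l.length := by omega
  have hget : orderStat v k = l.get ⟨k - 1, hklen⟩ := by
    rw [orderStat, ← hl, List.getD_eq_getElem l 0 hklen, List.get_eq_getElem]
  -- all elements of take k are < x
  have htake : ∀ a ∈ l.take k, a < x := by
    intro a ha
    obtain ⟨j, hj, rfl⟩ := List.mem_take_iff_getElem.mp ha
    have hjk : j < k := lt_of_lt_of_le hj (min_le_left _ _)
    have hle : l[j] ≤ l.get ⟨k - 1, hklen⟩ := by
      apply hsort.rel_get_of_le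
      simp [Fin.le_def]; omega
    rw [hget] at h
    exact lt_of_le_of_lt hle h
  have hlen_take : (l.take k).length = k := by
    rw [List.length_take]; omega
  have hcount_take : (l.take k).countP (fun b => decide (b < x)) = k := by
    rw [List.countP_eq_length.mpr (by intro a ha; simpa using htake a ha), hlen_take]
  have hcount : k ≤ l.countP (fun b => decide (b < x)) := by
    rw [← hcount_take]
    exact (List.take_sublist k l).countP_le (p := fun b => decide (b < x))
  -- relate countP of l to filter card
  have hcoe : (l : Multiset ℝ) = Multiset.map v Finset.univ.val := Multiset.sort_eq _ _
  have h2 : l.countP (fun b => decide (b < x))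
      = Multiset.countP (fun b => b < x) (Multiset.map v Finset.univ.val) := by
    rw [← hcoe, Multiset.coe_countP]
  rw [h2, Multiset.countP_map] at hcount
  have hcard : (Finset.univ.filter (fun i => v i < x)).card
      = Multiset.card (Multiset.filter (fun a => v a < x) Finset.univ.val) := rfl
  rw [hcard]
  exact hcount

/-- For i.i.d. real random variables `X₁, …, Xₙ` with common law `ν`, `0 < p < 1`,
`ε > 0` with `p + ε < 1`, if `x_p` is the `p`-th quantile and `P(X < x_p) = p`, then the
probability that the `⌈(p+ε)n⌉`-th order statistic is at least `x_p` is at least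
`1 - exp(-2nε²)`. -/
theorem percentile_bound_hoeffding
    {Ω : Type*} [MeasurableSpace Ω] (μ : Measure Ω) [IsProbabilityMeasure μ]
    (n : ℕ) (hn : 0 < n) (X : Fin n → Ω → ℝ)
    (hmeas : ∀ i, Measurable (X i))
    (hindep : iIndepFun X μ)
    (ν : Measure ℝ) [IsProbabilityMeasure ν]
    (hid : ∀ i, μ.map (X i) = ν)
    (p ε : ℝ) (hp0 : 0 < p) (hp1 : p < 1) (hε : 0 < ε) (hpε : p + ε < 1)
    (xp : ℝ) (hxp : xp = sInf {x : ℝ | p ≤ (ν (Set.Iic x)).toReal})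
    (hcont : (ν (Set.Iio xp)).toReal = p) :
    1 - Real.exp (-2 * (n : ℝ) * ε ^ 2)
      ≤ (μ {ω | xp ≤ orderStat (fun i => X i ω) ⌈(p + ε) * n⌉₊}).toReal := by
  classical
  have hn' : (0:ℝ) < n := Nat.cast_pos.mpr hn
  set k := ⌈(p + ε) * n⌉₊ with hk
  set g : ℝ → ℝ := fun x => if x < xp then 1 else 0 with hgdef
  have hgmeas : Measurable g := by
    apply Measurable.ite _ measurable_const measurable_const
    exact measurableSet_Iio
  set Y : Fin n → Ω → ℝ := fun i ω => g (X i ω) with hYdef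
  have hYmeas : ∀ i, Measurable (Y i) := fun i => hgmeas.comp (hmeas i)
  have hYindep : iIndepFun Y μ :=
    hindep.comp (fun _ => g) (fun _ => hgmeas)
  set A : Fin n → Set Ω := fun i => X i ⁻¹' Set.Iio xp with hAdef
  have hA : ∀ i, MeasurableSet (A i) := fun i => (hmeas i) measurableSet_Iio
  have hμA : ∀ i, (μ (A i)).toReal = p := by
    intro i
    rw [hAdef]
    rw [← Measure.map_apply (hmeas i) measurableSet_Iio, hid i]
    exact hcont
  -- representation of exp (t * Y i)
  have hrep : ∀ (t : ℝ) (i : Fin n), (fun ω => Real.exp (t * Y i ω))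
      = fun ω => (A i).indicator (fun _ => Real.exp t - 1) ω + 1 := by
    intro t i
    funext ω
    by_cases h : X i ω < xp
    · have hmem : ω ∈ A i := h
      simp [hYdef, hgdef, h, Set.indicator_of_mem hmem]
    · have hmem : ω ∉ A i := h
      simp [hYdef, hgdef, h, Set.indicator_of_notMem hmem]
  have hint : ∀ (t : ℝ) (i : Fin n), Integrable (fun ω => Real.exp (t * Y i ω)) μ := by
    intro t i
    rw [hrep t i]
    exact ((integrable_const (Real.exp t - 1)).indicator (hA i)).add (integrable_const 1)
  have hmgf : ∀ (t : ℝ) (i : Fin n), mgf (Y i) μ t = 1 - p + p * Real.exp t := by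
    intro t i
    rw [mgf, hrep t i, integral_add ((integrable_const (Real.exp t - 1)).indicator (hA i))
      (integrable_const 1), integral_indicator_const _ (hA i), integral_const]
    simp [hμA i]
    rw [show μ.real (A i) = p from hμA i]
    ring
  -- the sum
  set S : Ω → ℝ := ∑ i, Y i with hSdef
  have hSapp : ∀ ω, S ω = ∑ i, Y i ω := by
    intro ω; rw [hSdef]; simp [Finset.sum_apply]
  have hSmeas : Measurable S := by
    have h := Finset.measurable_sum Finset.univ (fun i _ => hYmeas i)
    have heq : S = fun ω => ∑ i, Y i ω := funext hSapp
    rw [heq]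
    exact h
  set t : ℝ := 4 * ε with htdef
  have ht : 0 ≤ t := by positivity
  have hSint : Integrable (fun ω => Real.exp (t * S ω)) μ :=
    hYindep.integrable_exp_mul_sum hYmeas (fun i _ => hint t i)
  have hmgfS : mgf S μ t = (1 - p + p * Real.exp t) ^ n := by
    rw [hSdef, hYindep.mgf_sum hYmeas]
    simp [hmgf t]
  -- Chernoff
  have hcher : (μ {ω | (p + ε) * n ≤ S ω}).toReal
      ≤ Real.exp (-t * ((p + ε) * n)) * mgf S μ t :=
    measure_ge_le_exp_mul_mgf ((p + ε) * n) ht hSint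
  have hbase0 : (0:ℝ) ≤ 1 - p + p * Real.exp t := by
    have := Real.exp_pos t
    nlinarith
  have hpow : (1 - p + p * Real.exp t) ^ n ≤ Real.exp (p * t + t ^ 2 / 8) ^ n :=
    pow_le_pow_left₀ hbase0 (bernoulli_mgf_bound p hp0.le hp1.le t ht) n
  have hfinal : (μ {ω | (p + ε) * n ≤ S ω}).toReal ≤ Real.exp (-2 * (n : ℝ) * ε ^ 2) := by
    calc (μ {ω | (p + ε) * n ≤ S ω}).toReal
        ≤ Real.exp (-t * ((p + ε) * n)) * mgf S μ t := hcher
      _ ≤ Real.exp (-t * ((p + ε) * n)) * Real.exp (p * t + t ^ 2 / 8) ^ n := by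
          rw [hmgfS]
          exact mul_le_mul_of_nonneg_left hpow (Real.exp_pos _).le
      _ = Real.exp (-2 * (n : ℝ) * ε ^ 2) := by
          rw [← Real.exp_nat_mul, ← Real.exp_add]
          congr 1
          rw [htdef]
          ring
  -- event inclusion
  have hk1 : 1 ≤ k := by
    rw [hk]
    exact Nat.one_le_iff_ne_zero.mpr (Nat.ceil_pos.mpr (by positivity)).ne'
  have hkn : k ≤ n := by
    rw [hk]
    apply Nat.ceil_le.mpr
    nlinarith
  have hsub : {ω | orderStat (fun i => X i ω) k < xp} ⊆ {ω | (p + ε) * n ≤ S ω} := by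
    intro ω hω
    have hc := orderStat_lt_count (fun i => X i ω) xp k hk1 hkn hω
    have hS : S ω = (Finset.univ.filter (fun i => X i ω < xp)).card := by
      rw [hSapp]
      simp [hYdef, hgdef, Finset.sum_boole]
    have h1 : (p + ε) * n ≤ (k : ℝ) := Nat.le_ceil _
    have h2 : (k : ℝ) ≤ ((Finset.univ.filter (fun i => X i ω < xp)).card : ℝ) :=
      Nat.cast_le.mpr hc
    show (p + ε) * n ≤ S ω
    rw [hS]
    linarith
  set F := {ω | (p + ε) * n ≤ S ω} with hFdef
  have hF : MeasurableSet F := measurableSet_le measurable_const hSmeas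
  have hFc : Fᶜ ⊆ {ω | xp ≤ orderStat (fun i => X i ω) k} := by
    intro ω hω
    by_contra hcon
    have hlt : orderStat (fun i => X i ω) k < xp := lt_of_not_ge (fun hle => hcon hle)
    exact hω (hsub hlt)
  have hcompl : (μ Fᶜ).toReal = 1 - (μ F).toReal := by
    rw [measure_compl hF (measure_ne_top μ F), measure_univ,
      ENNReal.toReal_sub_of_le prob_le_one ENNReal.one_ne_top, ENNReal.toReal_one]
  calc 1 - Real.exp (-2 * (n : ℝ) * ε ^ 2)
      ≤ 1 - (μ F).toReal := by linarith [hfinal]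
    _ = (μ Fᶜ).toReal := hcompl.symm
    _ ≤ (μ {ω | xp ≤ orderStat (fun i => X i ω) k}).toReal :=
        ENNReal.toReal_mono (measure_ne_top μ _) (measure_mono hFc)
end

section
/- Let Y be a binomially distributed random variable with parameters n ∈ ℕ and 0 < p < 1, and let a ∈ ℝ with p < a < 1. Then P(Y ≥ a·n) ≤ exp(−n · D_KL(Bernoulli(a) ‖ Bernoulli(p))), where D_KL(Bernoulli(a) ‖ Bernoulli(p)) = a·ln(a/p) + (1−a)·ln((1−a)/(1−p)). -/
open MeasureTheory ProbabilityTheory Finset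

/-- Chernoff bound for the binomial distribution: if `Y ~ Binomial(n, p)` with `0 < p < 1`
and `p < a < 1`, then `P(Y ≥ a·n) ≤ exp(-n · D_KL(Bernoulli(a) ‖ Bernoulli(p)))`. -/
theorem binomial_chernoff_bound
    {Ω : Type*} [MeasurableSpace Ω] (μ : Measure Ω) [IsProbabilityMeasure μ]
    (n : ℕ) (p : ℝ) (hp0 : 0 < p) (hp1 : p < 1)
    (Y : Ω → ℕ) (hmeas : Measurable Y)
    (hY : ∀ k ≤ n, (μ {ω | Y ω = k}).toReal
      = (n.choose k : ℝ) * p ^ k * (1 - p) ^ (n - k))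
    (a : ℝ) (hpa : p < a) (ha1 : a < 1) :
    (μ {ω | a * n ≤ (Y ω : ℝ)}).toReal
      ≤ Real.exp (-(n : ℝ) * bernoulliKL a p) := by
  have hq0 : (0:ℝ) < 1 - p := by linarith
  have ha0 : (0:ℝ) < a := lt_trans hp0 hpa
  have h1a : (0:ℝ) < 1 - a := by linarith
  set q : ℝ := 1 - p with hq
  -- the binomial mass sums to 1
  have hsum1 : ∑ k ∈ range (n+1), (n.choose k : ℝ) * p ^ k * q ^ (n - k) = 1 := by
    have h2 : ∑ k ∈ range (n+1), (n.choose k : ℝ) * p ^ k * q ^ (n - k) = (p + q) ^ n := by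
      rw [add_pow]
      exact Finset.sum_congr rfl (fun k _ => by ring)
    have hpq : p + q = 1 := by rw [hq]; ring
    rw [h2, hpq, one_pow]
  -- measure of {Y ≤ n} is 1
  have hdisj : (↑(range (n+1)) : Set ℕ).PairwiseDisjoint (fun k => {ω | Y ω = k}) := by
    intro i _ j _ hij
    refine Set.disjoint_left.mpr ?_
    intro ω h1 h2
    exact hij (h1.symm.trans h2)
  have hmk : ∀ k : ℕ, MeasurableSet {ω | Y ω = k} := fun k =>
    hmeas (measurableSet_singleton k)
  have hUnion : {ω | Y ω ≤ n} = ⋃ k ∈ range (n+1), {ω | Y ω = k} := by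
    ext ω
    simp [Nat.lt_succ_iff]
  have hμle : μ {ω | Y ω ≤ n} = ∑ k ∈ range (n+1), μ {ω | Y ω = k} := by
    rw [hUnion, measure_biUnion_finset hdisj (fun k _ => hmk k)]
  have hμle1 : μ {ω | Y ω ≤ n} = 1 := by
    have htr : (μ {ω | Y ω ≤ n}).toReal = 1 := by
      rw [hμle, ENNReal.toReal_sum (fun k _ => measure_ne_top μ _)]
      rw [Finset.sum_congr rfl (fun k hk => hY k (Nat.lt_succ_iff.mp (mem_range.mp hk)))]
      exact hsum1
    have := measure_ne_top μ {ω | Y ω ≤ n}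
    rw [← ENNReal.ofReal_toReal this, htr]
    simp
  have hzero : μ {ω | n < Y ω} = 0 := by
    have hc : {ω | n < Y ω} = {ω | Y ω ≤ n}ᶜ := by
      ext ω; simp [not_le]
    have hms : MeasurableSet {ω | Y ω ≤ n} := hmeas measurableSet_Iic
    rw [hc, measure_compl hms (measure_ne_top μ _), hμle1, measure_univ, tsub_self]
  -- tail set bound
  set F : Finset ℕ := (range (n+1)).filter (fun k => a * n ≤ (k:ℝ)) with hF
  have hsub : {ω | a * n ≤ (Y ω : ℝ)} ⊆ (⋃ k ∈ F, {ω | Y ω = k}) ∪ {ω | n < Y ω} := by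
    intro ω hω
    by_cases h : Y ω ≤ n
    · left
      simp only [Set.mem_iUnion]
      have hω' : a * n ≤ (Y ω : ℝ) := hω
      exact ⟨Y ω, by simp [hF, Nat.lt_succ_iff, h, hω'], rfl⟩
    · right; exact not_le.mp h
  have hmeasb : (μ {ω | a * n ≤ (Y ω : ℝ)}).toReal
      ≤ ∑ k ∈ F, (n.choose k : ℝ) * p ^ k * q ^ (n - k) := by
    have h1 : μ {ω | a * n ≤ (Y ω : ℝ)} ≤ ∑ k ∈ F, μ {ω | Y ω = k} := by
      calc μ {ω | a * n ≤ (Y ω : ℝ)} ≤ μ ((⋃ k ∈ F, {ω | Y ω = k}) ∪ {ω | n < Y ω}) :=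
            measure_mono hsub
        _ ≤ μ (⋃ k ∈ F, {ω | Y ω = k}) + μ {ω | n < Y ω} := measure_union_le _ _
        _ = μ (⋃ k ∈ F, {ω | Y ω = k}) := by rw [hzero, add_zero]
        _ ≤ ∑ k ∈ F, μ {ω | Y ω = k} := measure_biUnion_finset_le F _
    have h2 : (μ {ω | a * n ≤ (Y ω : ℝ)}).toReal ≤ (∑ k ∈ F, μ {ω | Y ω = k}).toReal :=
      ENNReal.toReal_mono (by
        exact (ENNReal.sum_lt_top.mpr (fun k _ => (measure_ne_top μ _).lt_top)).ne) h1
    rw [ENNReal.toReal_sum (fun k _ => measure_ne_top μ _)] at h2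
    refine h2.trans_eq (Finset.sum_congr rfl (fun k hk => ?_))
    exact hY k (Nat.lt_succ_iff.mp (mem_range.mp (Finset.mem_filter.mp hk).1))
  -- Chernoff parameter
  set t : ℝ := Real.log (a * q / ((1 - a) * p)) with htdef
  have hfrac1 : 1 < a * q / ((1 - a) * p) := by
    rw [lt_div_iff₀ (by positivity)]
    nlinarith
  have ht0 : 0 < t := Real.log_pos hfrac1
  have hexpt : Real.exp t = a * q / ((1 - a) * p) := Real.exp_log (by positivity)
  have hterm_nonneg : ∀ k, 0 ≤ (n.choose k : ℝ) * p ^ k * q ^ (n - k) := fun k => by positivity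
  -- bound filtered sum by exponential-weighted full sum
  have hstep : ∑ k ∈ F, (n.choose k : ℝ) * p ^ k * q ^ (n - k)
      ≤ ∑ k ∈ range (n+1), Real.exp (t * (k - a * n)) * ((n.choose k : ℝ) * p ^ k * q ^ (n - k)) := by
    calc ∑ k ∈ F, (n.choose k : ℝ) * p ^ k * q ^ (n - k)
        ≤ ∑ k ∈ F, Real.exp (t * (k - a * n)) * ((n.choose k : ℝ) * p ^ k * q ^ (n - k)) := by
          refine Finset.sum_le_sum (fun k hk => ?_)
          have hk' : a * n ≤ (k : ℝ) := (Finset.mem_filter.mp hk).2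
          have : (1:ℝ) ≤ Real.exp (t * (k - a * n)) := by
            rw [Real.one_le_exp_iff]
            have : (0:ℝ) ≤ (k:ℝ) - a * n := by linarith
            positivity
          nlinarith [hterm_nonneg k]
      _ ≤ ∑ k ∈ range (n+1), Real.exp (t * (k - a * n)) * ((n.choose k : ℝ) * p ^ k * q ^ (n - k)) := by
          refine Finset.sum_le_sum_of_subset_of_nonneg (Finset.filter_subset _ _) ?_
          intro k _ _
          have := hterm_nonneg k; positivity
  -- evaluate the full sum
  have heval : ∑ k ∈ range (n+1), Real.exp (t * (k - a * n)) * ((n.choose k : ℝ) * p ^ k * q ^ (n - k))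
      = Real.exp (-(t * (a * n))) * (p * Real.exp t + q) ^ n := by
    have := add_pow (p * Real.exp t) q n
    rw [this, Finset.mul_sum]
    refine Finset.sum_congr rfl (fun k hk => ?_)
    have h1 : Real.exp (t * (k - a * n)) = Real.exp (t * k) * Real.exp (-(t * (a * n))) := by
      rw [← Real.exp_add]; ring_nf
    have h2 : Real.exp (t * k) = (Real.exp t) ^ k := by
      rw [← Real.exp_nat_mul]; ring_nf
    rw [h1, h2, mul_pow]
    ring
  -- simplify p e^t + q
  have hbase : p * Real.exp t + q = q / (1 - a) := by
    rw [hexpt]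
    field_simp
    ring
  -- final exponent computation
  have hfinal : Real.exp (-(t * (a * n))) * (p * Real.exp t + q) ^ n
      = Real.exp (-(n : ℝ) * bernoulliKL a p) := by
    rw [hbase]
    have hqpos : 0 < q / (1 - a) := by positivity
    have hpow : (q / (1 - a)) ^ n = Real.exp ((n : ℝ) * Real.log (q / (1 - a))) := by
      rw [Real.exp_nat_mul, Real.exp_log hqpos]
    rw [hpow, ← Real.exp_add]
    congr 1
    have hlt : t = Real.log (a / p) + Real.log (q / (1 - a)) := by
      rw [htdef, ← Real.log_mul (by positivity) (by positivity)]
      congr 1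
      field_simp
    have hlog2 : Real.log ((1 - a) / q) = - Real.log (q / (1 - a)) := by
      rw [← Real.log_inv]
      congr 1
      field_simp
    rw [hlt]
    unfold bernoulliKL
    rw [hlog2]
    ring
  calc (μ {ω | a * n ≤ (Y ω : ℝ)}).toReal
      ≤ ∑ k ∈ F, (n.choose k : ℝ) * p ^ k * q ^ (n - k) := hmeasb
    _ ≤ ∑ k ∈ range (n+1), Real.exp (t * (k - a * n)) * ((n.choose k : ℝ) * p ^ k * q ^ (n - k)) := hstep
    _ = Real.exp (-(t * (a * n))) * (p * Real.exp t + q) ^ n := heval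
    _ = Real.exp (-(n : ℝ) * bernoulliKL a p) := hfinal
end
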